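/- arXiv:1504.06523 — 5 statements merged into one kernel-verified Lean document; each statement's English description precedes it below -/
import Mathlib

section
/- For any r > 0, the function (γ, u, v) ↦ γ^{-1/2}(1-γ)^{-1/2}(1+γ)^{-1} · (u + r·v)^{1/2} · u^{-1/2}(1-u)^{-1/2} · v^{-1/2}(1-v)^{-1/2} is Lebesgue-integrable on the open cube (0,1)³. (Jeffreys' prior for Dallal's model in the parameterization (γ,U,V) is proper.) -/
open MeasureTheory Set

/-- The one-dimensional arcsine-type density is integrable on `(0,1)`. -/
lemma dallal_aux_oneDim :
    IntegrableOn (fun x : ℝ => Real.sqrt (1 / (x * (1 - x)))) (Set.Ioo 0 1) volume := by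
  have meas : Measurable fun x : ℝ => Real.sqrt (1 / (x * (1 - x))) :=
    (measurable_const.div (measurable_id.mul (measurable_const.sub measurable_id))).sqrt
  -- integrability on the left half
  have base1 : IntegrableOn (fun x : ℝ => Real.sqrt 2 * x ^ (-(1/2) : ℝ))
      (Set.Ioc 0 (1/2 : ℝ)) volume :=
    ((intervalIntegral.intervalIntegrable_rpow' (by norm_num)).1).const_mul _
  have left : IntegrableOn (fun x : ℝ => Real.sqrt (1 / (x * (1 - x))))
      (Set.Ioc 0 (1/2 : ℝ)) volume := by
    refine base1.mono' meas.aestronglyMeasurable ?_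
    refine (ae_restrict_iff' measurableSet_Ioc).2 (Filter.Eventually.of_forall ?_)
    intro x hx
    have hx0 : (0:ℝ) < x := hx.1
    have hx1 : x ≤ 1/2 := hx.2
    rw [Real.norm_eq_abs, abs_of_nonneg (Real.sqrt_nonneg _)]
    have hle : 1 / (x * (1 - x)) ≤ 2 * (1 / x) := by
      rw [div_le_iff₀ (by nlinarith)]
      have e : 2 * (1 / x) * (x * (1 - x)) = 2 * (1 - x) := by
        field_simp
      rw [e]; linarith
    calc Real.sqrt (1 / (x * (1 - x))) ≤ Real.sqrt (2 * (1 / x)) := Real.sqrt_le_sqrt hle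
      _ = Real.sqrt 2 * Real.sqrt (1 / x) := Real.sqrt_mul (by norm_num) _
      _ = Real.sqrt 2 * x ^ (-(1/2) : ℝ) := by
          rw [Real.rpow_neg hx0.le, ← Real.sqrt_eq_rpow, ← Real.sqrt_inv, one_div]
  -- integrability on the right half
  have base2 : IntegrableOn (fun x : ℝ => Real.sqrt 2 * (1 - x) ^ (-(1/2) : ℝ))
      (Set.Ioc (1/2 : ℝ) 1) volume := by
    have h := ((intervalIntegral.intervalIntegrable_rpow' (r := -(1/2)) (by norm_num)
        (a := 0) (b := 1/2)).comp_sub_left 1)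
    norm_num at h
    exact (h.2).const_mul _
  have right : IntegrableOn (fun x : ℝ => Real.sqrt (1 / (x * (1 - x))))
      (Set.Ioc (1/2 : ℝ) 1) volume := by
    refine base2.mono' meas.aestronglyMeasurable ?_
    refine (ae_restrict_iff' measurableSet_Ioc).2 (Filter.Eventually.of_forall ?_)
    intro x hx
    have hx0 : (1/2:ℝ) < x := hx.1
    have hx1 : x ≤ 1 := hx.2
    rw [Real.norm_eq_abs, abs_of_nonneg (Real.sqrt_nonneg _)]
    rcases eq_or_lt_of_le hx1 with h1 | h1
    · simp [← h1]
      positivity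
    have h1x : (0:ℝ) < 1 - x := by linarith
    have hle : 1 / (x * (1 - x)) ≤ 2 * (1 / (1 - x)) := by
      rw [div_le_iff₀ (by nlinarith)]
      have e : 2 * (1 / (1 - x)) * (x * (1 - x)) = 2 * x := by
        field_simp
      rw [e]; linarith
    calc Real.sqrt (1 / (x * (1 - x))) ≤ Real.sqrt (2 * (1 / (1 - x))) := Real.sqrt_le_sqrt hle
      _ = Real.sqrt 2 * Real.sqrt (1 / (1 - x)) := Real.sqrt_mul (by norm_num) _
      _ = Real.sqrt 2 * (1 - x) ^ (-(1/2) : ℝ) := by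
          rw [Real.rpow_neg h1x.le, ← Real.sqrt_eq_rpow, ← Real.sqrt_inv, one_div]
  have : IntegrableOn (fun x : ℝ => Real.sqrt (1 / (x * (1 - x))))
      (Set.Ioc 0 (1/2 : ℝ) ∪ Set.Ioc (1/2 : ℝ) 1) volume := left.union right
  refine this.mono_set ?_
  intro x hx
  rcases le_or_gt x (1/2) with h | h
  · exact Or.inl ⟨hx.1, h⟩
  · exact Or.inr ⟨h, hx.2.le⟩

/-- Jeffreys' prior for Dallal's model in the parameterization `(γ, U, V)`,
proportional to `√((u+rv)/(γ(1-γ)(1+γ)² u(1-u) v(1-v)))`, is proper: it is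
Lebesgue-integrable on the open unit cube `(0,1)³`. -/
theorem dallal_jeffreys_prior_is_proper (r : ℝ) (hr : 0 < r) :
    IntegrableOn
      (fun p : ℝ × ℝ × ℝ =>
        Real.sqrt ((p.2.1 + r * p.2.2) /
          (p.1 * (1 - p.1) * (1 + p.1) ^ 2 * (p.2.1 * (1 - p.2.1)) *
            (p.2.2 * (1 - p.2.2)))))
      (Set.Ioo (0 : ℝ) 1 ×ˢ Set.Ioo (0 : ℝ) 1 ×ˢ Set.Ioo (0 : ℝ) 1) volume := by
  set h : ℝ → ℝ := fun x => Real.sqrt (1 / (x * (1 - x))) with hh_def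
  have hh := dallal_aux_oneDim
  have h23 : IntegrableOn (fun q : ℝ × ℝ => h q.1 * h q.2)
      (Set.Ioo (0:ℝ) 1 ×ˢ Set.Ioo (0:ℝ) 1) volume := by
    rw [IntegrableOn, Measure.volume_eq_prod, ← Measure.prod_restrict]
    exact hh.mul_prod hh
  have h123 : IntegrableOn (fun p : ℝ × ℝ × ℝ => h p.1 * (h p.2.1 * h p.2.2))
      (Set.Ioo (0:ℝ) 1 ×ˢ Set.Ioo (0:ℝ) 1 ×ˢ Set.Ioo (0:ℝ) 1) volume := by
    rw [IntegrableOn, Measure.volume_eq_prod, ← Measure.prod_restrict]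
    exact hh.mul_prod h23
  have hG : IntegrableOn
      (fun p : ℝ × ℝ × ℝ => Real.sqrt (1 + r) * (h p.1 * (h p.2.1 * h p.2.2)))
      (Set.Ioo (0:ℝ) 1 ×ˢ Set.Ioo (0:ℝ) 1 ×ˢ Set.Ioo (0:ℝ) 1) volume :=
    h123.const_mul _
  have meas : Measurable (fun p : ℝ × ℝ × ℝ =>
      Real.sqrt ((p.2.1 + r * p.2.2) /
        (p.1 * (1 - p.1) * (1 + p.1) ^ 2 * (p.2.1 * (1 - p.2.1)) *
          (p.2.2 * (1 - p.2.2))))) := by fun_prop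
  refine hG.mono' meas.aestronglyMeasurable ?_
  have hset : MeasurableSet
      (Set.Ioo (0:ℝ) 1 ×ˢ Set.Ioo (0:ℝ) 1 ×ˢ Set.Ioo (0:ℝ) 1) :=
    measurableSet_Ioo.prod (measurableSet_Ioo.prod measurableSet_Ioo)
  refine (ae_restrict_iff' hset).2 (Filter.Eventually.of_forall ?_)
  rintro ⟨g, u, v⟩ ⟨hg, hu, hv⟩
  simp only
  rw [Real.norm_eq_abs, abs_of_nonneg (Real.sqrt_nonneg _)]
  have hg0 : (0:ℝ) < g := hg.1
  have hg1 : g < 1 := hg.2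
  have hu0 : (0:ℝ) < u := hu.1
  have hu1 : u < 1 := hu.2
  have hv0 : (0:ℝ) < v := hv.1
  have hv1 : v < 1 := hv.2
  have hA : (0:ℝ) < g * (1 - g) * (u * (1 - u)) * (v * (1 - v)) := by
    have := mul_pos hg0 (by linarith : (0:ℝ) < 1 - g)
    have := mul_pos hu0 (by linarith : (0:ℝ) < 1 - u)
    have := mul_pos hv0 (by linarith : (0:ℝ) < 1 - v)
    positivity
  have key : (u + r * v) /
      (g * (1 - g) * (1 + g) ^ 2 * (u * (1 - u)) * (v * (1 - v))) ≤
      (1 + r) / (g * (1 - g) * (u * (1 - u)) * (v * (1 - v))) := by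
    apply div_le_div₀ (by linarith)
    · nlinarith
    · exact hA
    · nlinarith [mul_pos hg0 (by linarith : (0:ℝ) < 1 - g),
        mul_pos hu0 (by linarith : (0:ℝ) < 1 - u),
        mul_pos hv0 (by linarith : (0:ℝ) < 1 - v),
        sq_nonneg g]
  calc Real.sqrt ((u + r * v) /
        (g * (1 - g) * (1 + g) ^ 2 * (u * (1 - u)) * (v * (1 - v))))
      ≤ Real.sqrt ((1 + r) / (g * (1 - g) * (u * (1 - u)) * (v * (1 - v)))) :=
        Real.sqrt_le_sqrt key
    _ = Real.sqrt (1 + r) * (h g * (h u * h v)) := by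
        have hgp : (0:ℝ) < g * (1 - g) := mul_pos hg0 (by linarith)
        have hup : (0:ℝ) < u * (1 - u) := mul_pos hu0 (by linarith)
        have hvp : (0:ℝ) < v * (1 - v) := mul_pos hv0 (by linarith)
        rw [hh_def]
        rw [← Real.sqrt_mul (one_div_nonneg.2 hup.le)]
        rw [← Real.sqrt_mul (one_div_nonneg.2 hgp.le)]
        rw [← Real.sqrt_mul (by linarith : (0:ℝ) ≤ 1 + r)]
        congr 1
        rw [one_div, one_div, one_div, div_eq_mul_inv, mul_inv, mul_inv]
        ring
end

section
/- Let μ, ν > 0 and let γ be a random variable with density f(γ) = (2^{μ}/B(μ,ν)) γ^{μ-1}(1-γ)^{ν-1}/(1+γ)^{μ+ν} on (0,1). Then the random variable π = (1-γ)/(1+γ) has the Beta(ν, μ) distribution, i.e., π has density π^{ν-1}(1-π)^{μ-1}/B(ν,μ) on (0,1). -/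
/-!
The map `φ x = (1 - x) / (1 + x)` is an involution of `(0, 1)` with `|φ' x| = 2 / (1 + x) ^ 2`,
and `1 - φ x = 2 x / (1 + x)`, `1 + φ x = 2 / (1 + x)`. Hence the change of variables
`π = φ γ` multiplies the density of `γ`, evaluated at `φ π`, by `2 / (1 + π) ^ 2`; all powers
of `2` and of `1 + π` then cancel, leaving `π ^ (ν - 1) (1 - π) ^ (μ - 1) / B(μ, ν)`, and
`B(μ, ν) = B(ν, μ)`.
-/

open MeasureTheory

/-- The Beta function `B(a,b) = Γ(a)Γ(b)/Γ(a+b)`. -/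
noncomputable def betaFn (a b : ℝ) : ℝ := Real.Gamma a * Real.Gamma b / Real.Gamma (a + b)

open Set ENNReal

lemma betaFn_comm (a b : ℝ) : betaFn a b = betaFn b a := by
  rw [betaFn, betaFn, mul_comm, add_comm]

lemma image_inter_eq_inter_preimage_of_involutive {α : Type*} {s t : Set α} {φ : α → α}
    (hmaps : MapsTo φ s s) (hinv : ∀ x ∈ s, φ (φ x) = x) :
    φ '' (s ∩ t) = s ∩ φ ⁻¹' t := by
  ext x
  constructor
  · rintro ⟨y, ⟨hy, hyt⟩, rfl⟩
    exact ⟨hmaps hy, by rwa [mem_preimage, hinv y hy]⟩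
  · rintro ⟨hx, hxt⟩
    exact ⟨φ x, ⟨hmaps hx, hxt⟩, hinv x hx⟩

theorem map_withDensity_indicator_of_involutive {s : Set ℝ} (hs : MeasurableSet s)
    {φ φ' : ℝ → ℝ} (hφ : Measurable φ) (hmaps : MapsTo φ s s) (hinv : ∀ x ∈ s, φ (φ x) = x)
    (hφ' : ∀ x ∈ s, HasDerivWithinAt φ (φ' x) s x) (f : ℝ → ℝ≥0∞) :
    Measure.map φ (volume.withDensity (s.indicator f)) =
      volume.withDensity (s.indicator fun x => ENNReal.ofReal |φ' x| * f (φ x)) := by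
  ext t ht
  have hinj : InjOn φ (s ∩ t) := fun x hx y hy hxy => by
    rw [← hinv x hx.1, hxy, hinv y hy.1]
  rw [Measure.map_apply hφ ht, withDensity_apply _ (hφ ht), withDensity_apply _ ht,
    setLIntegral_indicator hs, setLIntegral_indicator hs,
    ← image_inter_eq_inter_preimage_of_involutive hmaps hinv,
    lintegral_image_eq_lintegral_abs_deriv_mul (hs.inter ht)
      (fun x hx => (hφ' x hx.1).mono inter_subset_left) hinj]

noncomputable def cayleyMap (x : ℝ) : ℝ := (1 - x) / (1 + x)

lemma measurable_cayleyMap : Measurable cayleyMap := by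
  unfold cayleyMap
  fun_prop

lemma one_sub_cayleyMap {x : ℝ} (hx : 1 + x ≠ 0) : 1 - cayleyMap x = 2 * x / (1 + x) := by
  rw [cayleyMap]
  field_simp
  ring

lemma one_add_cayleyMap {x : ℝ} (hx : 1 + x ≠ 0) : 1 + cayleyMap x = 2 / (1 + x) := by
  rw [cayleyMap]
  field_simp
  ring

lemma cayleyMap_cayleyMap {x : ℝ} (hx : 1 + x ≠ 0) : cayleyMap (cayleyMap x) = x := by
  rw [cayleyMap, one_sub_cayleyMap hx, one_add_cayleyMap hx]
  field_simp

lemma hasDerivAt_cayleyMap {x : ℝ} (hx : 1 + x ≠ 0) :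
    HasDerivAt cayleyMap (-2 / (1 + x) ^ 2) x :=
  (((hasDerivAt_id' x).const_sub 1).div ((hasDerivAt_id' x).const_add 1) hx).congr_deriv
    (by ring)

lemma mapsTo_cayleyMap_Ioo : MapsTo cayleyMap (Ioo 0 1) (Ioo 0 1) := by
  rintro x ⟨hx0, hx1⟩
  have hc : 0 < 1 + x := by linarith
  exact ⟨div_pos (by linarith) hc, (div_lt_one hc).2 (by linarith)⟩

noncomputable def dallalDensity (m n γ : ℝ) : ℝ :=
  (2 : ℝ) ^ m / betaFn m n * γ ^ (m - 1) * (1 - γ) ^ (n - 1) / (1 + γ) ^ (m + n)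

noncomputable def betaDensity (a b p : ℝ) : ℝ := p ^ (a - 1) * (1 - p) ^ (b - 1) / betaFn a b

lemma rpow_eq_sq_mul_rpow_sub_one_mul_rpow_sub_one {x : ℝ} (hx : 0 < x) (m n : ℝ) :
    x ^ (m + n) = x ^ 2 * x ^ (m - 1) * x ^ (n - 1) := by
  rw [← Real.rpow_two, ← Real.rpow_add hx, ← Real.rpow_add hx]
  congr 1
  ring

lemma abs_deriv_cayleyMap_mul_dallalDensity (m n : ℝ) {p : ℝ} (hp : p ∈ Ioo (0 : ℝ) 1) :
    |-2 / (1 + p) ^ 2| * dallalDensity m n (cayleyMap p) = betaDensity n m p := by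
  obtain ⟨hp0, hp1⟩ := hp
  have hc : 0 < 1 + p := by linarith
  rw [dallalDensity, betaDensity, betaFn_comm n m, one_sub_cayleyMap hc.ne',
    one_add_cayleyMap hc.ne', cayleyMap, abs_div, abs_neg, abs_two, abs_of_pos (by positivity),
    Real.div_rpow (by linarith) hc.le, Real.div_rpow (by positivity) hc.le,
    Real.div_rpow zero_le_two hc.le, Real.mul_rpow zero_le_two hp0.le,
    rpow_eq_sq_mul_rpow_sub_one_mul_rpow_sub_one hc,
    rpow_eq_sq_mul_rpow_sub_one_mul_rpow_sub_one two_pos, Real.rpow_sub_one two_ne_zero m]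
  field_simp

theorem dallal_gamma_transform_beta_general
    {Ω : Type*} [MeasurableSpace Ω] (μ : Measure Ω)
    (m n : ℝ)
    (G : Ω → ℝ) (hG : Measurable G)
    (hGlaw : Measure.map G μ =
      volume.withDensity (fun x => ENNReal.ofReal
        (Set.indicator (Set.Ioo (0 : ℝ) 1)
          (fun γ => (2 : ℝ) ^ m / betaFn m n * γ ^ (m - 1) * (1 - γ) ^ (n - 1) /
            (1 + γ) ^ (m + n)) x))) :
    Measure.map (fun ω => (1 - G ω) / (1 + G ω)) μ =
      volume.withDensity (fun x => ENNReal.ofReal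
        (Set.indicator (Set.Ioo (0 : ℝ) 1)
          (fun p => p ^ (n - 1) * (1 - p) ^ (m - 1) / betaFn n m) x)) := by
  have hofReal : ∀ f : ℝ → ℝ, (fun x => ENNReal.ofReal ((Ioo (0 : ℝ) 1).indicator f x)) =
      (Ioo (0 : ℝ) 1).indicator fun x => ENNReal.ofReal (f x) :=
    fun f => (indicator_comp_of_zero ofReal_zero).symm
  have hcayley_deriv : ∀ x ∈ Ioo (0 : ℝ) 1,
      HasDerivWithinAt cayleyMap (-2 / (1 + x) ^ 2) (Ioo 0 1) x :=
    fun x hx => (hasDerivAt_cayleyMap (by linarith [hx.1])).hasDerivWithinAt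
  change Measure.map (cayleyMap ∘ G) μ = _
  rw [← Measure.map_map measurable_cayleyMap hG, hGlaw, hofReal, hofReal,
    map_withDensity_indicator_of_involutive measurableSet_Ioo measurable_cayleyMap
      mapsTo_cayleyMap_Ioo (fun x hx => cayleyMap_cayleyMap (by linarith [hx.1])) hcayley_deriv]
  refine congrArg _ (indicator_congr fun p hp => ?_)
  rw [← ofReal_mul (abs_nonneg _)]
  exact congrArg ENNReal.ofReal (abs_deriv_cayleyMap_mul_dallalDensity m n hp)

/-- If `γ` has density `(2^μ/B(μ,ν)) γ^{μ-1}(1-γ)^{ν-1}/(1+γ)^{μ+ν}` on `(0,1)`,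
then `(1-γ)/(1+γ)` has the `Beta(ν,μ)` distribution. -/
theorem dallal_gamma_transform_beta
    {Ω : Type*} [MeasurableSpace Ω] (μ : Measure Ω) [IsProbabilityMeasure μ]
    (m n : ℝ) (hm : 0 < m) (hn : 0 < n)
    (G : Ω → ℝ) (hG : Measurable G)
    (hGlaw : Measure.map G μ =
      volume.withDensity (fun x => ENNReal.ofReal
        (Set.indicator (Set.Ioo (0 : ℝ) 1)
          (fun γ => (2 : ℝ) ^ m / betaFn m n * γ ^ (m - 1) * (1 - γ) ^ (n - 1) /
            (1 + γ) ^ (m + n)) x))) :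
    Measure.map (fun ω => (1 - G ω) / (1 + G ω)) μ =
      volume.withDensity (fun x => ENNReal.ofReal
        (Set.indicator (Set.Ioo (0 : ℝ) 1)
          (fun p => p ^ (n - 1) * (1 - p) ^ (m - 1) / betaFn n m) x)) :=
  dallal_gamma_transform_beta_general μ m n G hG hGlaw
end

section
/- Let m00, m10, m20, m01, m11, m21 be nonnegative integers with m1+ = m10+m11, m2+ = m20+m21. Then ∫₀¹∫₀¹∫₀¹ 2^{m1+} · γ^{m1+}(1-γ)^{m2+}/(1+γ)^{m1+ + m2+} · u^{m10+m20}(1-u)^{m00} · v^{m11+m21}(1-v)^{m01} · [2^{1/2}/(B(1/2,1/2))³ · γ^{-1/2}(1-γ)^{-1/2}/(1+γ) · u^{-1/2}(1-u)^{-1/2} · v^{-1/2}(1-v)^{-1/2}] dγ du dv = B(m1+ + 1/2, m2+ + 1/2) · B(m10+m20+1/2, m00+1/2) · B(m11+m21+1/2, m01+1/2) / B(1/2,1/2)³. (This computes the marginal predictive distribution of the data under hypothesis H1: λ0 ≠ λ1 for Dallal's model with the reference prior, up to the multinomial coefficients.) -/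
/-!
The likelihood times the reference prior factorises into a function of `γ`, one of `u` and one
of `v`, so the triple integral is a product of three one-dimensional integrals. The `u`- and
`v`-integrals are Beta integrals. The `γ`-integral is `∫ γ^(a-1) (1-γ)^(b-1) (1+γ)^(-(a+b))`,
which the substitution `y = 2γ/(1+γ)` turns into `2^(-a) B(a, b)`; the factor `2^(-a)` cancels
the powers of `2` in the likelihood and in the prior.
-/

open MeasureTheory

open Set

theorem integral_Ioo_rpow_mul_one_sub_rpow {a b : ℝ} (ha : 0 < a) (hb : 0 < b) :
    ∫ x in Ioo (0 : ℝ) 1, x ^ (a - 1) * (1 - x) ^ (b - 1) = betaFn a b := by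
  have h : Complex.betaIntegral a b =
      ↑(∫ x in Ioo (0 : ℝ) 1, x ^ (a - 1) * (1 - x) ^ (b - 1)) := by
    rw [Complex.betaIntegral, ← integral_Ioc_eq_integral_Ioo,
      ← intervalIntegral.integral_of_le zero_le_one, ← intervalIntegral.integral_ofReal]
    refine intervalIntegral.integral_congr fun x hx => ?_
    rw [uIcc_of_le zero_le_one] at hx
    push_cast
    rw [Complex.ofReal_cpow hx.1, Complex.ofReal_cpow (sub_nonneg.2 hx.2)]
    push_cast
    rfl
  rw [show betaFn a b = ProbabilityTheory.beta a b from rfl,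
    ProbabilityTheory.beta_eq_betaIntegralReal a b ha hb, h, Complex.ofReal_re]

theorem one_add_mul_pos_of_mem_Icc {c x : ℝ} (hc : -1 < c) (hx : x ∈ Icc (0 : ℝ) 1) :
    0 < 1 + c * x := by
  have hc1 : 0 ≤ 1 + c := by linarith
  nlinarith [mul_nonneg hc1 hx.1, mul_nonneg hc1 (sub_nonneg.2 hx.2), hx.1, hx.2]

theorem hasDerivAt_mul_div_one_add_mul {c x : ℝ} (hx : 1 + c * x ≠ 0) :
    HasDerivAt (fun x => (1 + c) * x / (1 + c * x)) ((1 + c) / (1 + c * x) ^ 2) x := by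
  refine (((hasDerivAt_id' x).const_mul (1 + c)).fun_div
    (((hasDerivAt_id' x).const_mul c).const_add 1) hx).congr_deriv ?_
  ring

theorem deriv_mul_beta_kernel_comp_mul_div_one_add_mul {a b c x : ℝ} (hc : -1 < c)
    (hx : x ∈ Ioo (0 : ℝ) 1) :
    (1 + c) / (1 + c * x) ^ 2 *
        (((1 + c) * x / (1 + c * x)) ^ (a - 1) * (1 - (1 + c) * x / (1 + c * x)) ^ (b - 1)) =
      (1 + c) ^ a * (x ^ (a - 1) * (1 - x) ^ (b - 1) * (1 + c * x) ^ (-(a + b))) := by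
  obtain ⟨hx0, hx1⟩ := hx
  have hd : 0 < 1 + c * x := one_add_mul_pos_of_mem_Icc hc ⟨hx0.le, hx1.le⟩
  have hc1 : 0 < 1 + c := by linarith
  rw [show 1 - (1 + c) * x / (1 + c * x) = (1 - x) / (1 + c * x) by field_simp; ring,
    Real.div_rpow (by positivity) hd.le, Real.div_rpow (by linarith) hd.le,
    Real.mul_rpow hc1.le hx0.le, Real.rpow_neg hd.le]
  have h1 : (1 + c) ^ a = (1 + c) * (1 + c) ^ (a - 1) := by
    conv_lhs => rw [show a = 1 + (a - 1) by ring, Real.rpow_add hc1, Real.rpow_one]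
  have h2 : (1 + c * x) ^ (a + b) =
      (1 + c * x) ^ 2 * ((1 + c * x) ^ (a - 1) * (1 + c * x) ^ (b - 1)) := by
    rw [← Real.rpow_add hd, ← Real.rpow_natCast, ← Real.rpow_add hd]; push_cast; ring_nf
  rw [h1, h2]
  field_simp

/-- The substitution `y = (1 + c) x / (1 + c x)`, under which `1 - y = (1 - x) / (1 + c x)`. -/
theorem integral_Ioo_rpow_mul_one_sub_rpow_mul_one_add_mul_rpow {a b c : ℝ} (ha : 0 < a)
    (hb : 0 < b) (hc : -1 < c) :
    ∫ x in Ioo (0 : ℝ) 1, x ^ (a - 1) * (1 - x) ^ (b - 1) * (1 + c * x) ^ (-(a + b)) =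
      (1 + c) ^ (-a) * betaFn a b := by
  have hc1 : 0 < 1 + c := by linarith
  have hderiv (x : ℝ) (hx : x ∈ Icc (0 : ℝ) 1) :=
    hasDerivAt_mul_div_one_add_mul (one_add_mul_pos_of_mem_Icc hc hx).ne'
  have key := integral_Icc_deriv_smul_of_deriv_nonneg
    (f := fun x => (1 + c) * x / (1 + c * x)) (g := fun y => y ^ (a - 1) * (1 - y) ^ (b - 1))
    (fun x hx => (hderiv x hx).continuousAt.continuousWithinAt)
    (fun x hx => hderiv x (Ioo_subset_Icc_self hx)) (fun x _ => by positivity) zero_le_one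
  simp only [mul_zero, add_zero, zero_div, mul_one, div_self hc1.ne', smul_eq_mul,
    integral_Icc_eq_integral_Ioo] at key
  rw [integral_Ioo_rpow_mul_one_sub_rpow ha hb, setIntegral_congr_fun measurableSet_Ioo
    (fun x hx => deriv_mul_beta_kernel_comp_mul_div_one_add_mul hc hx), integral_const_mul] at key
  rw [← key, Real.rpow_neg hc1.le, inv_mul_cancel_left₀ (by positivity)]

theorem pow_mul_rpow_neg_half {x : ℝ} (hx : 0 < x) (n : ℕ) :
    x ^ n * x ^ (-(1 : ℝ) / 2) = x ^ ((n : ℝ) + 1 / 2 - 1) := by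
  rw [← Real.rpow_natCast, ← Real.rpow_add hx]
  ring_nf

theorem integral_Ioo_pow_mul_one_sub_pow_mul_rpow_neg_half (n m : ℕ) :
    ∫ x in Ioo (0 : ℝ) 1, x ^ n * (1 - x) ^ m * (x ^ (-(1 : ℝ) / 2) * (1 - x) ^ (-(1 : ℝ) / 2)) =
      betaFn ((n : ℝ) + 1 / 2) ((m : ℝ) + 1 / 2) := by
  rw [← integral_Ioo_rpow_mul_one_sub_rpow (by positivity) (by positivity)]
  refine setIntegral_congr_fun measurableSet_Ioo fun x hx => ?_
  rw [← pow_mul_rpow_neg_half hx.1, ← pow_mul_rpow_neg_half (sub_pos.2 hx.2)]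
  ring

theorem integral_Ioo_pow_mul_one_sub_pow_div_one_add_pow_mul_rpow_neg_half (n m : ℕ) :
    ∫ x in Ioo (0 : ℝ) 1, x ^ n * (1 - x) ^ m / (1 + x) ^ (n + m) *
        (x ^ (-(1 : ℝ) / 2) * (1 - x) ^ (-(1 : ℝ) / 2) / (1 + x)) =
      2 ^ (-((n : ℝ) + 1 / 2)) * betaFn ((n : ℝ) + 1 / 2) ((m : ℝ) + 1 / 2) := by
  have h := integral_Ioo_rpow_mul_one_sub_rpow_mul_one_add_mul_rpow
    (a := (n : ℝ) + 1 / 2) (b := (m : ℝ) + 1 / 2) (c := 1) (by positivity) (by positivity)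
    (by norm_num)
  norm_num only [one_mul] at h
  rw [← h]
  refine setIntegral_congr_fun measurableSet_Ioo fun x hx => ?_
  have hx1 : 0 < 1 + x := by linarith [hx.1]
  rw [← pow_mul_rpow_neg_half hx.1, ← pow_mul_rpow_neg_half (sub_pos.2 hx.2),
    show -((n : ℝ) + 1 / 2 + ((m : ℝ) + 1 / 2)) = -((n + m + 1 : ℕ) : ℝ) by push_cast; ring,
    Real.rpow_neg hx1.le, Real.rpow_natCast, pow_succ]
  field_simp

theorem integral_integral_integral_mul_mul {α β γ : Type*} [MeasurableSpace α]
    [MeasurableSpace β] [MeasurableSpace γ] (μ : Measure α) (ν : Measure β) (ρ : Measure γ)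
    (f : α → ℝ) (g : β → ℝ) (h : γ → ℝ) :
    ∫ x, ∫ y, ∫ z, f x * g y * h z ∂ρ ∂ν ∂μ = (∫ x, f x ∂μ) * (∫ y, g y ∂ν) * ∫ z, h z ∂ρ := by
  simp only [integral_const_mul, integral_mul_const]

/-- The marginal predictive distribution of the data under `H₁ : λ0 ≠ λ1` for
Dallal's model with Bernardo's reference prior (up to multinomial coefficients):
the likelihood in the `(γ,u,v)` parameterization integrated against the reference
prior over `(0,1)³` equals
`B(m1+ + 1/2, m2+ + 1/2)·B(m10+m20+1/2, m00+1/2)·B(m11+m21+1/2, m01+1/2)/B(1/2,1/2)³`. -/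
theorem dallal_marginal_predictive_H1_reference_prior
    (m00 m10 m20 m01 m11 m21 : ℕ) :
    ∫ γ in Set.Ioo (0 : ℝ) 1, ∫ u in Set.Ioo (0 : ℝ) 1, ∫ v in Set.Ioo (0 : ℝ) 1,
        (2 : ℝ) ^ (m10 + m11) *
          (γ ^ (m10 + m11) * (1 - γ) ^ (m20 + m21) /
            (1 + γ) ^ ((m10 + m11) + (m20 + m21))) *
          (u ^ (m10 + m20) * (1 - u) ^ m00) * (v ^ (m11 + m21) * (1 - v) ^ m01) *
        ((2 : ℝ) ^ ((1 : ℝ) / 2) / betaFn (1 / 2) (1 / 2) ^ 3 *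
          (γ ^ (-(1 : ℝ) / 2) * (1 - γ) ^ (-(1 : ℝ) / 2) / (1 + γ)) *
          (u ^ (-(1 : ℝ) / 2) * (1 - u) ^ (-(1 : ℝ) / 2)) *
          (v ^ (-(1 : ℝ) / 2) * (1 - v) ^ (-(1 : ℝ) / 2))) =
      betaFn ((m10 : ℝ) + m11 + 1 / 2) ((m20 : ℝ) + m21 + 1 / 2) *
        betaFn ((m10 : ℝ) + m20 + 1 / 2) ((m00 : ℝ) + 1 / 2) *
        betaFn ((m11 : ℝ) + m21 + 1 / 2) ((m01 : ℝ) + 1 / 2) /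
        betaFn (1 / 2) (1 / 2) ^ 3 := by
  set C : ℝ := 2 ^ (m10 + m11) * 2 ^ ((1 : ℝ) / 2) / betaFn (1 / 2) (1 / 2) ^ 3
  have h2 : (2 : ℝ) ^ (m10 + m11) * 2 ^ ((1 : ℝ) / 2) * 2 ^ (-((m10 : ℝ) + m11 + 1 / 2)) = 1 := by
    rw [← Real.rpow_natCast, ← Real.rpow_add two_pos, ← Real.rpow_add two_pos]
    norm_num
  calc _ = ∫ γ in Ioo (0 : ℝ) 1, ∫ u in Ioo (0 : ℝ) 1, ∫ v in Ioo (0 : ℝ) 1,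
          C * (γ ^ (m10 + m11) * (1 - γ) ^ (m20 + m21) / (1 + γ) ^ ((m10 + m11) + (m20 + m21)) *
            (γ ^ (-(1 : ℝ) / 2) * (1 - γ) ^ (-(1 : ℝ) / 2) / (1 + γ))) *
          (u ^ (m10 + m20) * (1 - u) ^ m00 * (u ^ (-(1 : ℝ) / 2) * (1 - u) ^ (-(1 : ℝ) / 2))) *
          (v ^ (m11 + m21) * (1 - v) ^ m01 * (v ^ (-(1 : ℝ) / 2) * (1 - v) ^ (-(1 : ℝ) / 2))) := by
        congr! 6 with γ u v
        ring
    _ = _ := by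
        rw [integral_integral_integral_mul_mul, integral_const_mul,
          integral_Ioo_pow_mul_one_sub_pow_div_one_add_pow_mul_rpow_neg_half,
          integral_Ioo_pow_mul_one_sub_pow_mul_rpow_neg_half,
          integral_Ioo_pow_mul_one_sub_pow_mul_rpow_neg_half]
        push_cast
        linear_combination betaFn ((m10 : ℝ) + m11 + 1 / 2) ((m20 : ℝ) + m21 + 1 / 2) *
          betaFn ((m10 : ℝ) + m20 + 1 / 2) ((m00 : ℝ) + 1 / 2) *
          betaFn ((m11 : ℝ) + m21 + 1 / 2) ((m01 : ℝ) + 1 / 2) / betaFn (1 / 2) (1 / 2) ^ 3 * h2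
end

section
/- Let m00, m10, m20, m01, m11, m21 be nonnegative integers with m1+ = m10+m11, and let a0, a1 > 0. Then the quadruple integral over (0,1)⁴ of 2^{m1+} · γ0^{m10}(1-γ0)^{m20}/(1+γ0)^{m10+m20} · γ1^{m11}(1-γ1)^{m21}/(1+γ1)^{m11+m21} · u^{m10+m20}(1-u)^{m00} · v^{m11+m21}(1-v)^{m01} times the prior π(γ0,γ1,u,v) = [2^{1/2}γ0^{-1/2}(1-γ0)^{-1/2}/(B(1/2,1/2)(1+γ0))] · [2^{1/2}γ1^{-1/2}(1-γ1)^{-1/2}/(B(1/2,1/2)(1+γ1))] · [u^{a0-1}(1-u)^{-1/2}/B(a0,1/2)] · [v^{a1-1}(1-v)^{-1/2}/B(a1,1/2)] dγ0 dγ1 du dv equals [B(m10+1/2, m20+1/2)/B(1/2,1/2)] · [B(m11+1/2, m21+1/2)/B(1/2,1/2)] · [B(m10+m20+a0, m00+1/2)/B(a0,1/2)] · [B(m11+m21+a1, m01+1/2)/B(a1,1/2)]. (This is the marginal predictive distribution of the data under Dallal's saturated model H*1: γ0 ≠ γ1, up to the multinomial coefficients.) -/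
open MeasureTheory

/-!
The integrand is a product of one function of each of `γ0`, `γ1`, `u`, `v`, so the iterated
integral is the product of four one-dimensional integrals. Those in `u` and `v` are Beta
integrals. Those in `γ0` and `γ1` reduce to
`∫₀¹ γ^(a-1) (1-γ)^(b-1) (1+γ)^(-(a+b)) dγ = 2^(-a) B(a,b)`,
which the substitution `γ = t / (2 - t)`, a bijection of `(0,1)` onto itself, turns into a
Beta integral.
-/

open Set

theorem betaFn_eq_beta : betaFn = ProbabilityTheory.beta := rfl

theorem integral_integral_integral_integral_mul {α β γ δ : Type*} [MeasurableSpace α]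
    [MeasurableSpace β] [MeasurableSpace γ] [MeasurableSpace δ]
    (μ : Measure α) (ν : Measure β) (ρ : Measure γ) (σ : Measure δ)
    (f : α → ℝ) (g : β → ℝ) (h : γ → ℝ) (k : δ → ℝ) :
    ∫ a, ∫ b, ∫ c, ∫ d, f a * g b * h c * k d ∂σ ∂ρ ∂ν ∂μ =
      (∫ a, f a ∂μ) * (∫ b, g b ∂ν) * (∫ c, h c ∂ρ) * ∫ d, k d ∂σ := by
  simp only [integral_const_mul, integral_mul_const]

theorem abs_deriv_smul_comp_div_two_sub {a b t : ℝ} (ht0 : 0 < t) (ht1 : t < 1) :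
    |2 / (2 - t) ^ 2| • ((t / (2 - t)) ^ (a - 1) * (1 - t / (2 - t)) ^ (b - 1) *
      (1 + t / (2 - t)) ^ (-(a + b))) = 2 ^ (-a) * (t ^ (a - 1) * (1 - t) ^ (b - 1)) := by
  have hs : 0 < 2 - t := by linarith
  have h1t : 0 < 1 - t := by linarith
  rw [show 1 - t / (2 - t) = 2 * (1 - t) / (2 - t) by field_simp; ring,
    show 1 + t / (2 - t) = 2 / (2 - t) by field_simp; ring,
    abs_of_pos (by positivity), smul_eq_mul,
    Real.div_rpow ht0.le hs.le, Real.div_rpow (by positivity) hs.le,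
    Real.div_rpow zero_le_two hs.le, Real.mul_rpow zero_le_two h1t.le]
  simp only [Real.rpow_sub ht0, Real.rpow_sub hs, Real.rpow_sub h1t, Real.rpow_sub two_pos,
    Real.rpow_neg hs.le, Real.rpow_neg zero_le_two, Real.rpow_add hs, Real.rpow_add two_pos,
    Real.rpow_one]
  field_simp

theorem integral_Ioo_rpow_mul_one_sub_rpow_mul_one_add_rpow {a b : ℝ} (ha : 0 < a) (hb : 0 < b) :
    ∫ x in Ioo (0 : ℝ) 1, x ^ (a - 1) * (1 - x) ^ (b - 1) * (1 + x) ^ (-(a + b)) =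
      2 ^ (-a) * betaFn a b := by
  set φ : ℝ → ℝ := fun t => t / (2 - t)
  have hφ' : ∀ t ∈ Ioo (0 : ℝ) 1, HasDerivWithinAt φ (2 / (2 - t) ^ 2) (Ioo 0 1) t := by
    intro t ⟨_, ht1⟩
    refine (((hasDerivAt_id' t).fun_div ((hasDerivAt_const t 2).fun_sub (hasDerivAt_id' t))
      (by linarith)).congr_deriv ?_).hasDerivWithinAt
    ring
  have hφinj : InjOn φ (Ioo 0 1) := by
    intro s ⟨_, hs1⟩ t ⟨_, ht1⟩ hst
    rw [div_eq_div_iff (by linarith) (by linarith)] at hst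
    linarith
  have hφimg : φ '' Ioo 0 1 = Ioo 0 1 := by
    apply Subset.antisymm
    · rintro _ ⟨t, ⟨ht0, ht1⟩, rfl⟩
      exact ⟨div_pos ht0 (by linarith), (div_lt_one (by linarith)).2 (by linarith)⟩
    · rintro x ⟨hx0, hx1⟩
      refine ⟨2 * x / (1 + x),
        ⟨by positivity, (div_lt_one (by linarith)).2 (by linarith)⟩, ?_⟩
      simp only [φ]
      field_simp
      ring
  rw [← hφimg, integral_image_eq_integral_abs_deriv_smul measurableSet_Ioo hφ' hφinj,
    setIntegral_congr_fun measurableSet_Ioo fun t ⟨ht0, ht1⟩ =>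
      abs_deriv_smul_comp_div_two_sub ht0 ht1,
    integral_const_mul, integral_Ioo_rpow_mul_one_sub_rpow ha hb]

theorem integral_Ioo_likelihood_mul_gamma_prior (m n : ℕ) :
    ∫ γ in Ioo (0 : ℝ) 1, 2 ^ m * (γ ^ m * (1 - γ) ^ n / (1 + γ) ^ (m + n)) *
      (2 ^ ((1 : ℝ) / 2) * γ ^ (-(1 : ℝ) / 2) * (1 - γ) ^ (-(1 : ℝ) / 2) /
        (betaFn (1 / 2) (1 / 2) * (1 + γ))) =
      betaFn ((m : ℝ) + 1 / 2) ((n : ℝ) + 1 / 2) / betaFn (1 / 2) (1 / 2) := by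
  set a : ℝ := m + 1 / 2
  set b : ℝ := n + 1 / 2
  have hkernel : ∀ γ ∈ Ioo (0 : ℝ) 1,
      2 ^ m * (γ ^ m * (1 - γ) ^ n / (1 + γ) ^ (m + n)) *
        (2 ^ ((1 : ℝ) / 2) * γ ^ (-(1 : ℝ) / 2) * (1 - γ) ^ (-(1 : ℝ) / 2) /
          (betaFn (1 / 2) (1 / 2) * (1 + γ))) =
      2 ^ a / betaFn (1 / 2) (1 / 2) *
        (γ ^ (a - 1) * (1 - γ) ^ (b - 1) * (1 + γ) ^ (-(a + b))) := by
    intro γ ⟨hγ0, hγ1⟩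
    have h1γ : 0 < 1 - γ := by linarith
    have h1γ' : 0 < 1 + γ := by linarith
    rw [show a - 1 = -(1 : ℝ) / 2 + m by ring, show b - 1 = -(1 : ℝ) / 2 + n by ring,
      show -(a + b) = -(((m + n + 1 : ℕ) : ℝ)) by push_cast; ring,
      show a = (1 : ℝ) / 2 + m by ring,
      Real.rpow_add_natCast hγ0.ne', Real.rpow_add_natCast h1γ.ne',
      Real.rpow_add_natCast two_ne_zero, Real.rpow_neg h1γ'.le, Real.rpow_natCast, pow_succ]
    field_simp
  have hB : betaFn (1 / 2) (1 / 2) ≠ 0 :=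
    (ProbabilityTheory.beta_pos one_half_pos one_half_pos).ne'
  rw [setIntegral_congr_fun measurableSet_Ioo hkernel, integral_const_mul,
    integral_Ioo_rpow_mul_one_sub_rpow_mul_one_add_rpow (by positivity) (by positivity),
    Real.rpow_neg zero_le_two]
  field_simp

theorem integral_Ioo_binomial_mul_beta_density {a b : ℝ} (ha : 0 < a) (hb : 0 < b) (m k : ℕ) :
    ∫ x in Ioo (0 : ℝ) 1, x ^ m * (1 - x) ^ k * (x ^ (a - 1) * (1 - x) ^ (b - 1) / betaFn a b) =
      betaFn (m + a) (k + b) / betaFn a b := by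
  have hkernel : ∀ x ∈ Ioo (0 : ℝ) 1,
      x ^ m * (1 - x) ^ k * (x ^ (a - 1) * (1 - x) ^ (b - 1) / betaFn a b) =
        (betaFn a b)⁻¹ * (x ^ ((m + a) - 1) * (1 - x) ^ ((k + b) - 1)) := by
    intro x ⟨hx0, hx1⟩
    rw [add_comm (m : ℝ), add_comm (k : ℝ), add_sub_right_comm, add_sub_right_comm,
      Real.rpow_add_natCast hx0.ne', Real.rpow_add_natCast (sub_pos.2 hx1).ne']
    ring
  rw [setIntegral_congr_fun measurableSet_Ioo hkernel, integral_const_mul,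
    integral_Ioo_rpow_mul_one_sub_rpow (by positivity) (by positivity), inv_mul_eq_div]

/-- The marginal predictive distribution of the data under Dallal's saturated model
`H₁* : γ0 ≠ γ1` (up to multinomial coefficients): integrating the saturated-model
likelihood in the `(γ0,γ1,u,v)` parameterization against the prior
`π(γ0,γ1,u,v)` over `(0,1)⁴` yields
`[B(m10+1/2, m20+1/2)/B(1/2,1/2)]·[B(m11+1/2, m21+1/2)/B(1/2,1/2)]·
 [B(m10+m20+a0, m00+1/2)/B(a0,1/2)]·[B(m11+m21+a1, m01+1/2)/B(a1,1/2)]`. -/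
theorem dallal_marginal_predictive_saturated_model
    (m00 m10 m20 m01 m11 m21 : ℕ) (a0 a1 : ℝ) (ha0 : 0 < a0) (ha1 : 0 < a1) :
    ∫ γ0 in Set.Ioo (0 : ℝ) 1, ∫ γ1 in Set.Ioo (0 : ℝ) 1,
      ∫ u in Set.Ioo (0 : ℝ) 1, ∫ v in Set.Ioo (0 : ℝ) 1,
        (2 : ℝ) ^ (m10 + m11) *
          (γ0 ^ m10 * (1 - γ0) ^ m20 / (1 + γ0) ^ (m10 + m20)) *
          (γ1 ^ m11 * (1 - γ1) ^ m21 / (1 + γ1) ^ (m11 + m21)) *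
          (u ^ (m10 + m20) * (1 - u) ^ m00) * (v ^ (m11 + m21) * (1 - v) ^ m01) *
        ((2 : ℝ) ^ ((1 : ℝ) / 2) * γ0 ^ (-(1 : ℝ) / 2) * (1 - γ0) ^ (-(1 : ℝ) / 2) /
            (betaFn (1 / 2) (1 / 2) * (1 + γ0)) *
          ((2 : ℝ) ^ ((1 : ℝ) / 2) * γ1 ^ (-(1 : ℝ) / 2) * (1 - γ1) ^ (-(1 : ℝ) / 2) /
            (betaFn (1 / 2) (1 / 2) * (1 + γ1))) *
          (u ^ (a0 - 1) * (1 - u) ^ (-(1 : ℝ) / 2) / betaFn a0 (1 / 2)) *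
          (v ^ (a1 - 1) * (1 - v) ^ (-(1 : ℝ) / 2) / betaFn a1 (1 / 2))) =
      betaFn ((m10 : ℝ) + 1 / 2) ((m20 : ℝ) + 1 / 2) / betaFn (1 / 2) (1 / 2) *
        (betaFn ((m11 : ℝ) + 1 / 2) ((m21 : ℝ) + 1 / 2) / betaFn (1 / 2) (1 / 2)) *
        (betaFn ((m10 : ℝ) + m20 + a0) ((m00 : ℝ) + 1 / 2) / betaFn a0 (1 / 2)) *
        (betaFn ((m11 : ℝ) + m21 + a1) ((m01 : ℝ) + 1 / 2) / betaFn a1 (1 / 2)) := by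
  have hu := integral_Ioo_binomial_mul_beta_density ha0 one_half_pos (m10 + m20) m00
  have hv := integral_Ioo_binomial_mul_beta_density ha1 one_half_pos (m11 + m21) m01
  rw [show (1 / 2 - 1 : ℝ) = -1 / 2 by norm_num, Nat.cast_add] at hu hv
  rw [← hu, ← hv, ← integral_Ioo_likelihood_mul_gamma_prior m10 m20,
    ← integral_Ioo_likelihood_mul_gamma_prior m11 m21,
    ← integral_integral_integral_integral_mul]
  congr 1; ext γ0; congr 1; ext γ1; congr 1; ext u; congr 1; ext v
  rw [pow_add]
  ring
end

section
/- Let μ > 1 and ν > 1, and let f(γ) = γ^{μ-1}(1-γ)^{ν-1}/(1+γ)^{μ+ν} on (0,1). Set Λ = (2ν+μ-1)² − 8(μ-1). Then Λ ≥ 0, the point γ* = 2(μ-1)/(2ν+μ-1+√Λ) lies in (0,1), and f is unimodal with mode γ*: f is strictly increasing on (0, γ*] and strictly decreasing on [γ*, 1). -/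
open Real Set


/-- For `μ, ν > 1`, the kernel `f(γ) = γ^{μ-1}(1-γ)^{ν-1}/(1+γ)^{μ+ν}` on `(0,1)`
is unimodal with mode `γ* = 2(μ-1)/(2ν+μ-1+√Λ)` where `Λ = (2ν+μ-1)² − 8(μ-1)`:
one has `Λ ≥ 0`, `γ* ∈ (0,1)`, `f` is strictly increasing on `(0,γ*]` and
strictly decreasing on `[γ*,1)`. -/
theorem dallal_gamma_kernel_unimodal (m n : ℝ) (hm : 1 < m) (hn : 1 < n) :
    0 ≤ (2 * n + m - 1) ^ 2 - 8 * (m - 1) ∧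
    2 * (m - 1) / (2 * n + m - 1 + Real.sqrt ((2 * n + m - 1) ^ 2 - 8 * (m - 1))) ∈
      Set.Ioo (0 : ℝ) 1 ∧
    StrictMonoOn (fun γ : ℝ => γ ^ (m - 1) * (1 - γ) ^ (n - 1) / (1 + γ) ^ (m + n))
      (Set.Ioc 0
        (2 * (m - 1) / (2 * n + m - 1 + Real.sqrt ((2 * n + m - 1) ^ 2 - 8 * (m - 1))))) ∧
    StrictAntiOn (fun γ : ℝ => γ ^ (m - 1) * (1 - γ) ^ (n - 1) / (1 + γ) ^ (m + n))
      (Set.Ico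
        (2 * (m - 1) / (2 * n + m - 1 + Real.sqrt ((2 * n + m - 1) ^ 2 - 8 * (m - 1))))
        1) := by
  have hΛ : 0 ≤ (2 * n + m - 1) ^ 2 - 8 * (m - 1) := by
    nlinarith [sq_nonneg (m - 3), mul_pos (sub_pos.2 hn) (by linarith : (0:ℝ) < n + m)]
  set b : ℝ := 2 * n + m - 1 with hbdef
  set s : ℝ := Real.sqrt (b ^ 2 - 8 * (m - 1)) with hsdef
  have hs0 : 0 ≤ s := Real.sqrt_nonneg _
  have hs2 : s ^ 2 = b ^ 2 - 8 * (m - 1) := Real.sq_sqrt hΛ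
  have hb2 : 2 < b := by simp only [hbdef]; linarith
  have hbs : 0 < b + s := by linarith
  have hsb : s < b := by nlinarith
  have hceq : 2 * (m - 1) / (b + s) = (b - s) / 4 := by
    rw [div_eq_div_iff hbs.ne' (by norm_num : (4:ℝ) ≠ 0)]
    nlinarith
  rw [hceq]
  set c : ℝ := (b - s) / 4 with hcdef
  have hc0 : 0 < c := by simp only [hcdef]; linarith
  have hc1 : c < 1 := by
    simp only [hcdef]
    nlinarith [sq_nonneg (s + 4 - b)]
  -- the second root
  set r : ℝ := (b + s) / 4 with hrdef
  have hr1 : 1 < r := by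
    simp only [hrdef]
    nlinarith [sq_nonneg (b - 4 - s)]
  have hcr : c ≤ r := by simp only [hcdef, hrdef]; linarith
  -- factorization of the quadratic
  have hquad : ∀ x : ℝ, 2 * x ^ 2 - b * x + (m - 1) = 2 * (x - c) * (x - r) := by
    intro x
    simp only [hcdef, hrdef]
    linear_combination ((1:ℝ)/8) * hs2
  -- log of the kernel
  set L : ℝ → ℝ := fun γ =>
    (m - 1) * Real.log γ + (n - 1) * Real.log (1 - γ) - (m + n) * Real.log (1 + γ) with hLdef
  have hfL : ∀ γ ∈ Ioo (0:ℝ) 1,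
      γ ^ (m - 1) * (1 - γ) ^ (n - 1) / (1 + γ) ^ (m + n) = Real.exp (L γ) := by
    intro γ hγ
    rw [Real.rpow_def_of_pos hγ.1, Real.rpow_def_of_pos (by linarith [hγ.2] : (0:ℝ) < 1 - γ),
      Real.rpow_def_of_pos (by linarith [hγ.1] : (0:ℝ) < 1 + γ), ← Real.exp_add, ← Real.exp_sub]
    simp only [hLdef]
    ring_nf
  have hL' : ∀ x ∈ Ioo (0:ℝ) 1, HasDerivAt L
      ((m - 1) * x⁻¹ + (n - 1) * (-1 / (1 - x)) - (m + n) * (1 / (1 + x))) x := by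
    intro x hx
    have h1 : HasDerivAt (fun γ : ℝ => Real.log γ) x⁻¹ x := Real.hasDerivAt_log (ne_of_gt hx.1)
    have h2 : HasDerivAt (fun γ : ℝ => Real.log (1 - γ)) (-1 / (1 - x)) x :=
      ((hasDerivAt_id x).const_sub 1).log (by simpa using (sub_pos.2 hx.2).ne')
    have h3 : HasDerivAt (fun γ : ℝ => Real.log (1 + γ)) (1 / (1 + x)) x :=
      ((hasDerivAt_id x).const_add 1).log (by simpa using (ne_of_gt (by linarith [hx.1] : (0:ℝ) < 1 + x)))
    exact ((h1.const_mul (m - 1)).add (h2.const_mul (n - 1))).sub (h3.const_mul (m + n))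
  have hDval : ∀ x ∈ Ioo (0:ℝ) 1,
      (m - 1) * x⁻¹ + (n - 1) * (-1 / (1 - x)) - (m + n) * (1 / (1 + x)) =
        (2 * x ^ 2 - b * x + (m - 1)) / (x * (1 - x) * (1 + x)) := by
    intro x hx
    have h1 : x ≠ 0 := ne_of_gt hx.1
    have h2 : (1:ℝ) - x ≠ 0 := by linarith [hx.2]
    have h3 : (1:ℝ) + x ≠ 0 := by linarith [hx.1]
    field_simp
    ring
  have hderiv : ∀ x ∈ Ioo (0:ℝ) 1,
      deriv L x = (2 * x ^ 2 - b * x + (m - 1)) / (x * (1 - x) * (1 + x)) := by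
    intro x hx
    rw [(hL' x hx).deriv, hDval x hx]
  have hcont : ∀ t : Set ℝ, t ⊆ Ioo (0:ℝ) 1 → ContinuousOn L t := fun t ht x hx =>
    ((hL' x (ht hx)).differentiableAt.continuousAt).continuousWithinAt
  have hsub1 : Ioc (0:ℝ) c ⊆ Ioo (0:ℝ) 1 := fun x hx => ⟨hx.1, lt_of_le_of_lt hx.2 hc1⟩
  have hsub2 : Ico c 1 ⊆ Ioo (0:ℝ) 1 := fun x hx => ⟨lt_of_lt_of_le hc0 hx.1, hx.2⟩
  have hLmono : StrictMonoOn L (Ioc 0 c) := by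
    apply strictMonoOn_of_deriv_pos (convex_Ioc _ _) (hcont _ hsub1)
    intro x hx
    rw [interior_Ioc] at hx
    have hx1 : x ∈ Ioo (0:ℝ) 1 := ⟨hx.1, lt_trans hx.2 hc1⟩
    rw [hderiv x hx1, hquad x]
    apply div_pos
    · have ha : x - c < 0 := by linarith [hx.2]
      have hb' : x - r < 0 := by linarith [lt_of_lt_of_le hx.2 hcr]
      nlinarith [mul_pos_of_neg_of_neg ha hb']
    · exact mul_pos (mul_pos hx1.1 (by linarith [hx1.2])) (by linarith [hx1.1])
  have hLanti : StrictAntiOn L (Ico c 1) := by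
    apply strictAntiOn_of_deriv_neg (convex_Ico _ _) (hcont _ hsub2)
    intro x hx
    rw [interior_Ico] at hx
    have hx1 : x ∈ Ioo (0:ℝ) 1 := ⟨lt_trans hc0 hx.1, hx.2⟩
    rw [hderiv x hx1, hquad x]
    apply div_neg_of_neg_of_pos
    · have ha : 0 < x - c := by linarith [hx.1]
      have hb' : x - r < 0 := by linarith [lt_trans hx.2 hr1]
      nlinarith [mul_pos_of_neg_of_neg (neg_neg_of_pos ha) hb']
    · exact mul_pos (mul_pos hx1.1 (by linarith [hx1.2])) (by linarith [hx1.1])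
  refine ⟨hΛ, ⟨hc0, hc1⟩, ?_, ?_⟩
  · intro x hx y hy hxy
    simp only
    rw [hfL x (hsub1 hx), hfL y (hsub1 hy)]
    exact Real.exp_lt_exp.2 (hLmono hx hy hxy)
  · intro x hx y hy hxy
    simp only
    rw [hfL x (hsub2 hx), hfL y (hsub2 hy)]
    exact Real.exp_lt_exp.2 (hLanti hx hy hxy)
end
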